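/- arXiv:2201.00041 — 2 statements merged into one kernel-verified Lean document; each statement's English description precedes it below -/
import Mathlib

section
/- Let τ0 ∈ (t0,t1] and let ψ : ℝ^m → ℝ be a linear functional that vanishes on the reachable set R(t0,τ) for every τ ∈ [t0,τ0). Then ψ vanishes on R(t0,τ0). (Left semi-continuity of the reachable-set dimension; the key claim in the proof of Proposition 3.2 (iii).) -/
/-!
The endpoint map `τ ↦ E(τ, Δu)` of a fixed control is the primitive of the locally integrable
function `t ↦ A(t) Δu(t)`, hence continuous in `τ`. So `ψ ∘ E(·, Δu)` is continuous on
`[t0, τ0]` and vanishes on `[t0, τ0)`, whose closure contains `τ0`.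
-/

open MeasureTheory Set

noncomputable section

/-- A control: a measurable, essentially bounded map `ℝ → ℝ^k`. -/
def IsControl (k : ℕ) (u : ℝ → Fin k → ℝ) : Prop :=
  Measurable u ∧ ∃ C : ℝ, ∀ᵐ t : ℝ, ‖u t‖ ≤ C

/-- The endpoint map `E_a(τ, Δu) = ∫_a^τ A(t) · Δu(t) dt`. -/
def epMap (k m : ℕ) (A : ℝ → Matrix (Fin m) (Fin k) ℝ) (a τ : ℝ)
    (u : ℝ → Fin k → ℝ) : Fin m → ℝ :=
  ∫ t in a..τ, (A t).mulVec (u t)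

/-- The reachable set `R(a,τ)` of the characteristic linear control system. -/
def reach (k m : ℕ) (A : ℝ → Matrix (Fin m) (Fin k) ℝ) (a τ : ℝ) :
    Set (Fin m → ℝ) :=
  { v | ∃ u, IsControl k u ∧ epMap k m A a τ u = v }

open scoped Matrix

theorem Matrix.norm_mulVec_le_of_forall_abs_le {m n : Type*} [Fintype m] [Fintype n]
    {A : Matrix m n ℝ} {C : ℝ} (hC : 0 ≤ C) (hA : ∀ i j, |A i j| ≤ C) (v : n → ℝ) :
    ‖A *ᵥ v‖ ≤ Fintype.card n * C * ‖v‖ := by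
  refine (pi_norm_le_iff_of_nonneg (by positivity)).2 fun i => ?_
  calc ‖(A *ᵥ v) i‖ = ‖∑ j, A i j * v j‖ := rfl
    _ ≤ ∑ j, ‖A i j * v j‖ := norm_sum_le _ _
    _ ≤ ∑ _j : n, C * ‖v‖ := Finset.sum_le_sum fun j _ => by
      rw [norm_mul, Real.norm_eq_abs]
      exact mul_le_mul (hA i j) (norm_le_pi_norm v j) (norm_nonneg _) hC
    _ = Fintype.card n * C * ‖v‖ := by simp [mul_assoc]

theorem Measurable.matrix_mulVec {α m n : Type*} [MeasurableSpace α] [Fintype n]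
    {A : α → Matrix m n ℝ} {u : α → n → ℝ} (hA : ∀ i j, Measurable fun t => A t i j)
    (hu : Measurable u) : Measurable fun t => A t *ᵥ u t :=
  measurable_pi_lambda _ fun i =>
    Finset.measurable_sum _ fun j _ => (hA i j).mul ((measurable_pi_apply j).comp hu)

section ControlSystem

variable {k m : ℕ} {A : ℝ → Matrix (Fin m) (Fin k) ℝ} {u : ℝ → Fin k → ℝ}

theorem IsControl.integrableOn_mulVec (hu : IsControl k u)
    (hAmeas : ∀ i j, Measurable fun t => A t i j) {s : Set ℝ} (hs : MeasurableSet s)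
    (hs_finite : volume s ≠ ⊤) {C : ℝ} (hA : ∀ t ∈ s, ∀ i j, |A t i j| ≤ C) :
    IntegrableOn (fun t => A t *ᵥ u t) s := by
  obtain ⟨hum, Cu, hCu⟩ := hu
  have hA' : ∀ t ∈ s, ∀ i j, |A t i j| ≤ max C 0 := fun t ht i j =>
    (hA t ht i j).trans (le_max_left _ _)
  refine Measure.integrableOn_of_bounded hs_finite
    (hum.matrix_mulVec hAmeas).aestronglyMeasurable (M := k * max C 0 * Cu) ?_
  filter_upwards [ae_restrict_of_ae hCu, ae_restrict_mem hs] with t hut ht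
  calc ‖A t *ᵥ u t‖ ≤ k * max C 0 * ‖u t‖ := by
        simpa using Matrix.norm_mulVec_le_of_forall_abs_le (le_max_right _ _) (hA' t ht) (u t)
    _ ≤ k * max C 0 * Cu := by gcongr

theorem IsControl.continuousOn_epMap (hu : IsControl k u)
    (hAmeas : ∀ i j, Measurable fun t => A t i j) {a b C : ℝ}
    (hA : ∀ t ∈ uIcc a b, ∀ i j, |A t i j| ≤ C) :
    ContinuousOn (fun τ => epMap k m A a τ u) (uIcc a b) :=
  intervalIntegral.continuousOn_primitive_interval
    (hu.integrableOn_mulVec hAmeas measurableSet_uIcc measure_Icc_lt_top.ne hA)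

end ControlSystem

theorem reach_left_semicontinuous_general
    (t0 t1 : ℝ) (k m : ℕ)
    (A : ℝ → Matrix (Fin m) (Fin k) ℝ)
    (hAmeas : ∀ i j, Measurable fun t => A t i j)
    (hAbdd : ∃ C : ℝ, ∀ t ∈ Set.Icc t0 t1, ∀ i j, |A t i j| ≤ C)
    (τ0 : ℝ) (hτ0 : τ0 ∈ Set.Ioc t0 t1)
    (ψ : (Fin m → ℝ) →ₗ[ℝ] ℝ)
    (hψ : ∀ τ ∈ Set.Ico t0 τ0, ∀ v ∈ reach k m A t0 τ, ψ v = 0) :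
    ∀ v ∈ reach k m A t0 τ0, ψ v = 0 := by
  rintro v ⟨u, hu, rfl⟩
  obtain ⟨C, hC⟩ := hAbdd
  have hle : t0 ≤ τ0 := hτ0.1.le
  have hA : ∀ t ∈ uIcc t0 τ0, ∀ i j, |A t i j| ≤ C := fun t ht =>
    hC t (Icc_subset_Icc_right hτ0.2 (by rwa [uIcc_of_le hle] at ht))
  have hcont : ContinuousOn (fun τ => ψ (epMap k m A t0 τ u)) (Icc t0 τ0) := by
    have := hu.continuousOn_epMap hAmeas hA
    rw [uIcc_of_le hle] at this
    exact ψ.continuous_of_finiteDimensional.comp_continuousOn this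
  have hzero : EqOn (fun τ => ψ (epMap k m A t0 τ u)) 0 (Ico t0 τ0) := fun τ hτ =>
    hψ τ hτ _ ⟨u, hu, rfl⟩
  exact hzero.of_subset_closure hcont continuousOn_const Ico_subset_Icc_self
    (by rw [closure_Ico hτ0.1.ne]) ⟨hle, le_rfl⟩

/-- **Left semi-continuity of the reachable-set dimension** (key claim in the
proof of Proposition 3.2 (iii)). If a linear functional `ψ` on `ℝ^m` vanishes
on `R(t0,τ)` for every `τ ∈ [t0,τ0)`, then it vanishes on `R(t0,τ0)`. -/
theorem reach_left_semicontinuous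
    (t0 t1 : ℝ) (ht : t0 < t1) (k m : ℕ)
    (A : ℝ → Matrix (Fin m) (Fin k) ℝ)
    (hAmeas : ∀ i j, Measurable fun t => A t i j)
    (hAbdd : ∃ C : ℝ, ∀ t ∈ Set.Icc t0 t1, ∀ i j, |A t i j| ≤ C)
    (τ0 : ℝ) (hτ0 : τ0 ∈ Set.Ioc t0 t1)
    (ψ : (Fin m → ℝ) →ₗ[ℝ] ℝ)
    (hψ : ∀ τ ∈ Set.Ico t0 τ0, ∀ v ∈ reach k m A t0 τ, ψ v = 0) :
    ∀ v ∈ reach k m A t0 τ0, ψ v = 0 :=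
  reach_left_semicontinuous_general t0 t1 k m A hAmeas hAbdd τ0 hτ0 ψ hψ
end
end

section
/- Controls with disjoint supports whose first piece returns to the origin are orthogonal for the cost form: let t0 ≤ s ≤ s' ≤ t1, let Δu be a control vanishing almost everywhere outside [t0,s] and satisfying E(s,Δu) = 0, and let Δv be a control vanishing almost everywhere outside [s',t1]. Then C(t1, Δu + Δv) = C(t1,Δu) + C(t1,Δv); i.e., the polarization of the quadratic cost C(t1,·) vanishes on the pair (Δu,Δv). (The orthogonality claim used in the proof of Lemma 4.3.) -/
open MeasureTheory Set

noncomputable section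

/-- The quadratic cost `C_a(τ, Δu) = ∫_a^τ ⟨Δu(t), W(t)·E_a(t,Δu)⟩ dt` of the
characteristic optimal control problem. -/
def cost (k m : ℕ) (A : ℝ → Matrix (Fin m) (Fin k) ℝ)
    (W : ℝ → Matrix (Fin k) (Fin m) ℝ) (a τ : ℝ) (u : ℝ → Fin k → ℝ) : ℝ :=
  ∫ t in a..τ, dotProduct (u t) ((W t).mulVec (epMap k m A a t u))

/-- The set of costs of controls steering the system from `0` at time `a`
to `v` at time `τ`. -/
def costSet (k m : ℕ) (A : ℝ → Matrix (Fin m) (Fin k) ℝ)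
    (W : ℝ → Matrix (Fin k) (Fin m) ℝ) (a τ : ℝ) (v : Fin m → ℝ) : Set ℝ :=
  { c | ∃ u, IsControl k u ∧ epMap k m A a τ u = v ∧ cost k m A W a τ u = c }

/-! The endpoint curve `E(·, Δu)` vanishes on `[s, t1]` (it returns to `0` at `s` and `Δu` is then
switched off) and `E(·, Δv)` vanishes on `[t0, s']`. Hence in the integrand of `C(t1, Δu + Δv)`
each cross term `⟨Δu, W E(·, Δv)⟩`, `⟨Δv, W E(·, Δu)⟩` has a factor vanishing at almost every
time. Boundedness of `A`, `W` and the controls puts all integrands in `L^∞` of `[t0, t1]`, so the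
endpoint map is additive and the cost integral splits. -/

open Matrix
open scoped ENNReal Matrix Interval

section EssentiallyBounded

variable {α ι κ 𝕜 : Type*} [MeasurableSpace α] {μ : Measure α} [NormedRing 𝕜]

lemma memLp_top_restrict_entries {M : α → Matrix κ ι ℝ} {s : Set α}
    (hM : ∀ i j, Measurable fun t => M t i j) (hs : MeasurableSet s)
    (hbdd : ∃ C : ℝ, ∀ t ∈ s, ∀ i j, |M t i j| ≤ C) :
    ∀ i j, MemLp (fun t => M t i j) ∞ (μ.restrict s) := by
  obtain ⟨C, hC⟩ := hbdd
  exact fun i j => memLp_top_of_bound (hM i j).aestronglyMeasurable C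
    (ae_restrict_of_forall_mem hs fun t ht => (Real.norm_eq_abs _).trans_le (hC t ht i j))

lemma MeasureTheory.MemLp.dotProduct [Fintype ι] {u v : α → ι → 𝕜} (hu : MemLp u ∞ μ)
    (hv : MemLp v ∞ μ) :
    MemLp (fun t => u t ⬝ᵥ v t) ∞ μ :=
  memLp_finsetSum _ fun i _ => (hv.eval i).mul' (hu.eval i)

lemma MeasureTheory.MemLp.mulVec [Fintype ι] [Fintype κ] {M : α → Matrix κ ι 𝕜} {u : α → ι → 𝕜}
    (hM : ∀ i j, MemLp (fun t => M t i j) ∞ μ) (hu : MemLp u ∞ μ) :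
    MemLp (fun t => M t *ᵥ u t) ∞ μ :=
  MemLp.of_eval fun i => (MemLp.of_eval (hM i)).dotProduct hu

lemma ae_dotProduct_mulVec_eq_zero_of_ae_eq_zero [Fintype ι] [Fintype κ] {M : α → Matrix ι κ 𝕜}
    {u : α → ι → 𝕜} {z : α → κ → 𝕜} {S : Set α} (hu : ∀ᵐ t ∂μ, t ∉ S → u t = 0)
    (hz : ∀ t ∈ S, z t = 0) :
    ∀ᵐ t ∂μ, u t ⬝ᵥ (M t *ᵥ z t) = 0 := by
  filter_upwards [hu] with t ht
  by_cases hS : t ∈ S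
  · simp [hz t hS]
  · simp [ht hS]

end EssentiallyBounded

lemma ContinuousOn.memLp_top_restrict {E : Type*} [NormedAddCommGroup E] {f : ℝ → E}
    {s : Set ℝ} (hf : ContinuousOn f s) (hs : IsCompact s) :
    MemLp f ∞ (volume.restrict s) := by
  obtain ⟨C, hC⟩ := hs.exists_bound_of_continuousOn hf
  exact memLp_top_of_bound (hf.aestronglyMeasurable hs.measurableSet) C
    (ae_restrict_of_forall_mem hs.measurableSet hC)

lemma MeasureTheory.MemLp.intervalIntegrable_of_mem_Icc {E : Type*} [NormedAddCommGroup E]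
    {f : ℝ → E} {t0 t1 a b : ℝ} (hf : MemLp f ∞ (volume.restrict (Icc t0 t1))) (ha : a ∈ Icc t0 t1)
    (hb : b ∈ Icc t0 t1) : IntervalIntegrable f volume a b :=
  (IntegrableOn.mono_set (hf.integrable le_top) (uIcc_subset_Icc ha hb)).intervalIntegrable

section ControlSystem

variable {k m : ℕ} {A : ℝ → Matrix (Fin m) (Fin k) ℝ} {W : ℝ → Matrix (Fin k) (Fin m) ℝ}
  {u v : ℝ → Fin k → ℝ} {a s τ : ℝ}

lemma IsControl.memLp_top (hu : IsControl k u) : MemLp u ∞ volume := by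
  obtain ⟨C, hC⟩ := hu.2
  exact memLp_top_of_bound hu.1.aestronglyMeasurable C hC

lemma IsControl.memLp_top_mulVec {S : Set ℝ} (hu : IsControl k u)
    (hAmeas : ∀ i j, Measurable fun t => A t i j) (hS : MeasurableSet S)
    (hAbdd : ∃ C : ℝ, ∀ t ∈ S, ∀ i j, |A t i j| ≤ C) :
    MemLp (fun t => A t *ᵥ u t) ∞ (volume.restrict S) :=
  MemLp.mulVec (memLp_top_restrict_entries hAmeas hS hAbdd) (hu.memLp_top.restrict _)

lemma epMap_self : epMap k m A a a u = 0 :=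
  intervalIntegral.integral_same

lemma epMap_add (hu : IntervalIntegrable (fun t => A t *ᵥ u t) volume a τ)
    (hv : IntervalIntegrable (fun t => A t *ᵥ v t) volume a τ) :
    epMap k m A a τ (u + v) = epMap k m A a τ u + epMap k m A a τ v := by
  simp only [epMap, Pi.add_apply, mulVec_add]
  exact intervalIntegral.integral_add hu hv

lemma epMap_eq_of_ae_eq_zero (hint : IntervalIntegrable (fun t => A t *ᵥ u t) volume a s)
    (hu : ∀ᵐ t, t ∈ Ι s τ → u t = 0) : epMap k m A a τ u = epMap k m A a s u := by
  have hzero : ∀ᵐ t, t ∈ Ι s τ → A t *ᵥ u t = 0 := by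
    filter_upwards [hu] with t ht hts
    rw [ht hts, mulVec_zero]
  have hint' : IntervalIntegrable (fun t => A t *ᵥ u t) volume s τ :=
    (intervalIntegrable_const (c := (0 : Fin m → ℝ))).congr_ae
      ((ae_restrict_iff' measurableSet_uIoc).2 (by filter_upwards [hzero] with t ht hts
        using (ht hts).symm))
  rw [epMap, ← intervalIntegral.integral_add_adjacent_intervals hint hint',
    intervalIntegral.integral_zero_ae hzero, add_zero, epMap]

lemma continuousOn_epMap (hint : IntegrableOn (fun t => A t *ᵥ u t) (Icc a τ)) (haτ : a ≤ τ) :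
    ContinuousOn (fun t => epMap k m A a t u) (Icc a τ) := by
  rw [← uIcc_of_le haτ] at hint ⊢
  exact intervalIntegral.continuousOn_primitive_interval hint

lemma memLp_top_dotProduct_mulVec_epMap {t0 t1 : ℝ} {z : ℝ → Fin k → ℝ}
    (hAmeas : ∀ i j, Measurable fun t => A t i j)
    (hAbdd : ∃ C : ℝ, ∀ t ∈ Icc t0 t1, ∀ i j, |A t i j| ≤ C)
    (hWmeas : ∀ i j, Measurable fun t => W t i j)
    (hWbdd : ∃ C : ℝ, ∀ t ∈ Icc t0 t1, ∀ i j, |W t i j| ≤ C)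
    (h01 : t0 ≤ t1) (hu : IsControl k u) (hz : IsControl k z) :
    MemLp (fun t => u t ⬝ᵥ (W t *ᵥ epMap k m A t0 t z)) ∞ (volume.restrict (Icc t0 t1)) := by
  have hAz := hz.memLp_top_mulVec hAmeas measurableSet_Icc hAbdd
  have hEz := (continuousOn_epMap (hAz.integrable le_top) h01).memLp_top_restrict isCompact_Icc
  exact (hu.memLp_top.restrict _).dotProduct
    (MemLp.mulVec (memLp_top_restrict_entries hWmeas measurableSet_Icc hWbdd) hEz)

lemma cost_add_of_ae_cross_terms_eq_zero
    (hE : ∀ t ∈ Ι a τ, epMap k m A a t (u + v) = epMap k m A a t u + epMap k m A a t v)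
    (huv : ∀ᵐ t, u t ⬝ᵥ (W t *ᵥ epMap k m A a t v) = 0)
    (hvu : ∀ᵐ t, v t ⬝ᵥ (W t *ᵥ epMap k m A a t u) = 0)
    (hu : IntervalIntegrable (fun t => u t ⬝ᵥ (W t *ᵥ epMap k m A a t u)) volume a τ)
    (hv : IntervalIntegrable (fun t => v t ⬝ᵥ (W t *ᵥ epMap k m A a t v)) volume a τ) :
    cost k m A W a τ (u + v) = cost k m A W a τ u + cost k m A W a τ v := by
  rw [cost, cost, cost, ← intervalIntegral.integral_add hu hv]
  refine intervalIntegral.integral_congr_ae ?_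
  filter_upwards [huv, hvu] with t huv hvu ht
  rw [hE t ht, Pi.add_apply, mulVec_add, add_dotProduct, dotProduct_add, dotProduct_add, huv, hvu,
    add_zero, zero_add]

end ControlSystem

theorem cost_orthogonal_disjoint_supports_general
    (t0 t1 : ℝ) (k m : ℕ)
    (A : ℝ → Matrix (Fin m) (Fin k) ℝ)
    (hAmeas : ∀ i j, Measurable fun t => A t i j)
    (hAbdd : ∃ C : ℝ, ∀ t ∈ Set.Icc t0 t1, ∀ i j, |A t i j| ≤ C)
    (W : ℝ → Matrix (Fin k) (Fin m) ℝ)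
    (hWmeas : ∀ i j, Measurable fun t => W t i j)
    (hWbdd : ∃ C : ℝ, ∀ t ∈ Set.Icc t0 t1, ∀ i j, |W t i j| ≤ C)
    (s s' : ℝ) (hs0 : t0 ≤ s) (hss' : s ≤ s') (hs1 : s' ≤ t1)
    (Δu : ℝ → Fin k → ℝ) (hΔu : IsControl k Δu)
    (hΔusupp : ∀ᵐ t : ℝ, t ∉ Set.Icc t0 s → Δu t = 0)
    (hΔuret : epMap k m A t0 s Δu = 0)
    (Δv : ℝ → Fin k → ℝ) (hΔv : IsControl k Δv)
    (hΔvsupp : ∀ᵐ t : ℝ, t ∉ Set.Icc s' t1 → Δv t = 0) :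
    cost k m A W t0 t1 (Δu + Δv) =
      cost k m A W t0 t1 Δu + cost k m A W t0 t1 Δv := by
  have h01 : t0 ≤ t1 := hs0.trans (hss'.trans hs1)
  have hAu := hΔu.memLp_top_mulVec hAmeas measurableSet_Icc hAbdd
  have hAv := hΔv.memLp_top_mulVec hAmeas measurableSet_Icc hAbdd
  have hEu : ∀ τ ∈ Icc s t1, epMap k m A t0 τ Δu = 0 := fun τ hτ => by
    refine (epMap_eq_of_ae_eq_zero (hAu.intervalIntegrable_of_mem_Icc ⟨le_rfl, h01⟩
      ⟨hs0, hss'.trans hs1⟩) ?_).trans hΔuret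
    filter_upwards [hΔusupp] with t ht hts
    exact ht fun h => (uIoc_of_le hτ.1 ▸ hts).1.not_ge h.2
  have hEv : ∀ τ ∈ Icc t0 s', epMap k m A t0 τ Δv = 0 := fun τ hτ => by
    refine (epMap_eq_of_ae_eq_zero (s := t0) (by simp) ?_).trans epMap_self
    filter_upwards [hΔvsupp, volume.ae_ne s'] with t ht hne hts
    exact ht fun h => hne (le_antisymm ((uIoc_of_le hτ.1 ▸ hts).2.trans hτ.2) h.1)
  have hcost := fun {w} (hw : IsControl k w) =>
    (memLp_top_dotProduct_mulVec_epMap hAmeas hAbdd hWmeas hWbdd h01 hw hw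
      ).intervalIntegrable_of_mem_Icc ⟨le_rfl, h01⟩ ⟨h01, le_rfl⟩
  refine cost_add_of_ae_cross_terms_eq_zero (fun τ hτ => ?_)
    (ae_dotProduct_mulVec_eq_zero_of_ae_eq_zero hΔusupp fun t ht => hEv t ⟨ht.1, ht.2.trans hss'⟩)
    (ae_dotProduct_mulVec_eq_zero_of_ae_eq_zero hΔvsupp fun t ht => hEu t ⟨hss'.trans ht.1, ht.2⟩)
    (hcost hΔu) (hcost hΔv)
  rw [uIoc_of_le h01] at hτ
  exact epMap_add (hAu.intervalIntegrable_of_mem_Icc ⟨le_rfl, h01⟩ ⟨hτ.1.le, hτ.2⟩)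
    (hAv.intervalIntegrable_of_mem_Icc ⟨le_rfl, h01⟩ ⟨hτ.1.le, hτ.2⟩)

/-- **Orthogonality claim used in the proof of Lemma 4.3.** Controls with
disjoint supports whose first piece returns to the origin are orthogonal for
the cost form: if `Δu` vanishes a.e. outside `[t0,s]` with `E(s,Δu) = 0` and
`Δv` vanishes a.e. outside `[s',t1]` with `s ≤ s'`, then
`C(t1,Δu+Δv) = C(t1,Δu) + C(t1,Δv)`. -/
theorem cost_orthogonal_disjoint_supports
    (t0 t1 : ℝ) (ht : t0 < t1) (k m : ℕ)
    (A : ℝ → Matrix (Fin m) (Fin k) ℝ)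
    (hAmeas : ∀ i j, Measurable fun t => A t i j)
    (hAbdd : ∃ C : ℝ, ∀ t ∈ Set.Icc t0 t1, ∀ i j, |A t i j| ≤ C)
    (W : ℝ → Matrix (Fin k) (Fin m) ℝ)
    (hWmeas : ∀ i j, Measurable fun t => W t i j)
    (hWbdd : ∃ C : ℝ, ∀ t ∈ Set.Icc t0 t1, ∀ i j, |W t i j| ≤ C)
    (s s' : ℝ) (hs0 : t0 ≤ s) (hss' : s ≤ s') (hs1 : s' ≤ t1)
    (Δu : ℝ → Fin k → ℝ) (hΔu : IsControl k Δu)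
    (hΔusupp : ∀ᵐ t : ℝ, t ∉ Set.Icc t0 s → Δu t = 0)
    (hΔuret : epMap k m A t0 s Δu = 0)
    (Δv : ℝ → Fin k → ℝ) (hΔv : IsControl k Δv)
    (hΔvsupp : ∀ᵐ t : ℝ, t ∉ Set.Icc s' t1 → Δv t = 0) :
    cost k m A W t0 t1 (Δu + Δv) =
      cost k m A W t0 t1 Δu + cost k m A W t0 t1 Δv :=
  cost_orthogonal_disjoint_supports_general t0 t1 k m A hAmeas hAbdd W hWmeas hWbdd s s' hs0 hss'
    hs1 Δu hΔu hΔusupp hΔuret Δv hΔv hΔvsupp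
end
end
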